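/- (Maximal function via telescoping along entropy scales.) Let $(f_k)_{k \in K}$ be a finite family of real numbers and $\lambda \mapsto N_\lambda$ its greedy jump-counting function. Then for any fixed $k_0 \in K$ and any $v_0 \in \mathbb{Z}$, $\max_{k \in K} |f_k| \leq |f_{k_0}| + 2^{-v_0} + C \sum_{v > v_0} 2^{-v} N_{2^{-v}}^{1/2}$ for an absolute constant $C$. More precisely, one has $\max_k |f_k| \leq |f_{k_0}| + \sum_{v \in \mathbb{Z} : 2^{-v} \leq 2\,\mathrm{diam}} C\, 2^{-v} N_{2^{-v}}^{1/2}$ where $\mathrm{diam} = \max_{k,k'} |f_k - f_{k'}|$. -/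

import Mathlib

noncomputable def jumpCount (f : ℤ → ℝ) (K : Finset ℤ) (lam : ℝ) : ℕ :=
  sSup {M : ℕ | ∃ k : Fin (M + 1) → ℤ, StrictMono k ∧ (∀ i, k i ∈ K) ∧
    ∀ i : Fin M, lam < |f (k i.succ) - f (k i.castSucc)|}

/-!
A single scale already suffices. If `δ = |f k - f k₀| > 0`, pick `v` with
`δ / 4 < 2^(-v) < δ`: the pair `k, k₀` is a jump of size more than `2^(-v)`, so
`N_{2^(-v)} ≥ 1` and the `v`-th term with `C = 4` is at least `4 · 2^(-v) > δ`. The scale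
satisfies `2^(-v) < δ ≤ D`, so this term occurs in the sum, and all terms are nonnegative.
The series converges because it vanishes for `2^(-v) > 2D` and `N_λ ≤ #K`.
-/

theorem summable_of_eq_zero_of_lt_of_le_geometric {f : ℤ → ℝ} {a : ℤ} {c r : ℝ}
    (hr₀ : 0 < r) (hr₁ : r < 1) (hf : 0 ≤ f) (hzero : ∀ v < a, f v = 0)
    (hle : ∀ v, f v ≤ c * r ^ v) : Summable f := by
  have hinj : Function.Injective fun n : ℕ => a + n := fun m n h => by simpa using h
  have hrange : ∀ v ∉ Set.range fun n : ℕ => a + n, f v = 0 := by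
    refine fun v hv => hzero v (not_le.mp fun hav => hv ⟨(v - a).toNat, ?_⟩)
    simp only
    omega
  rw [← hinj.summable_iff hrange]
  refine .of_nonneg_of_le (fun n => hf _) (fun n => ?_)
    ((summable_geometric_of_lt_one hr₀.le hr₁).mul_left (c * r ^ a))
  calc f (a + n) ≤ c * r ^ (a + n) := hle _
    _ = c * r ^ a * r ^ n := by rw [zpow_add₀ hr₀.ne', zpow_natCast, mul_assoc]

section jumpCount

variable {f : ℤ → ℝ} {K : Finset ℤ} {lam : ℝ}

theorem card_mem_upperBounds_jumpCount_set (f : ℤ → ℝ) (K : Finset ℤ) (lam : ℝ) :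
    K.card ∈ upperBounds {M : ℕ | ∃ k : Fin (M + 1) → ℤ, StrictMono k ∧ (∀ i, k i ∈ K) ∧
      ∀ i : Fin M, lam < |f (k i.succ) - f (k i.castSucc)|} := by
  rintro M ⟨k, hmono, hmem, -⟩
  have := Finset.card_le_card_of_injOn (s := .univ) k (fun i _ => hmem i) hmono.injective.injOn
  simp only [Finset.card_univ, Fintype.card_fin] at this
  omega

theorem jumpCount_le_card (f : ℤ → ℝ) (K : Finset ℤ) (lam : ℝ) :
    jumpCount f K lam ≤ K.card :=
  csSup_le' (card_mem_upperBounds_jumpCount_set f K lam)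

theorem one_le_jumpCount {a b : ℤ} (ha : a ∈ K) (hb : b ∈ K) (hab : a ≠ b)
    (h : lam < |f a - f b|) : 1 ≤ jumpCount f K lam := by
  wlog hlt : a < b generalizing a b
  · exact this hb ha hab.symm (abs_sub_comm (f a) (f b) ▸ h) (hab.lt_or_gt.resolve_left hlt)
  refine le_csSup ⟨_, card_mem_upperBounds_jumpCount_set f K lam⟩ ⟨![a, b], ?_, ?_, ?_⟩
  · simpa [Fin.strictMono_iff_lt_succ] using hlt
  · intro i
    fin_cases i <;> assumption
  · intro i
    fin_cases i
    simpa [abs_sub_comm] using h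

theorem exists_scale_abs_sub_le {a b : ℤ} (ha : a ∈ K) (hb : b ∈ K) (hpos : 0 < |f a - f b|) :
    ∃ v : ℤ, (2 : ℝ) ^ (-v) < |f a - f b| ∧
      |f a - f b| ≤ 4 * (2 : ℝ) ^ (-v) * (jumpCount f K ((2 : ℝ) ^ (-v)) : ℝ) ^ ((1 : ℝ) / 2) := by
  obtain ⟨n, hlo, hhi⟩ := exists_mem_Ico_zpow (half_pos hpos) one_lt_two
  have hjump : (2 : ℝ) ^ n < |f a - f b| := by linarith
  have hab : a ≠ b := by
    rintro rfl
    simp at hpos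
  have hN : 1 ≤ (jumpCount f K ((2 : ℝ) ^ n) : ℝ) ^ ((1 : ℝ) / 2) :=
    Real.one_le_rpow (by exact_mod_cast one_le_jumpCount ha hb hab hjump) (by norm_num)
  refine ⟨-n, by rwa [neg_neg], ?_⟩
  rw [neg_neg]
  have h2n : (2 : ℝ) ^ (n + 1) = 2 * 2 ^ n := by rw [zpow_add_one₀ two_ne_zero, mul_comm]
  nlinarith [zpow_pos (two_pos : (0 : ℝ) < 2) n]

theorem summable_jumpCount_series (f : ℤ → ℝ) (K : Finset ℤ) {C : ℝ} (hC : 0 ≤ C) (D : ℝ) :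
    Summable fun v : ℤ => if (2 : ℝ) ^ (-v) ≤ 2 * D then
      C * (2 : ℝ) ^ (-v) * (jumpCount f K ((2 : ℝ) ^ (-v)) : ℝ) ^ ((1 : ℝ) / 2) else 0 := by
  obtain ⟨N, hN⟩ := pow_unbounded_of_one_lt (2 * D) (one_lt_two : (1 : ℝ) < 2)
  refine summable_of_eq_zero_of_lt_of_le_geometric (a := -N)
    (c := C * (K.card : ℝ) ^ ((1 : ℝ) / 2)) (by norm_num : (0 : ℝ) < 2⁻¹) (by norm_num)
    (fun v => by dsimp only; split_ifs <;> positivity) (fun v hv => if_neg ?_) (fun v => ?_)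
  · rw [not_le, ← zpow_natCast] at *
    exact hN.trans (zpow_lt_zpow_right₀ one_lt_two (by omega))
  · have hcard : (jumpCount f K ((2 : ℝ) ^ (-v)) : ℝ) ^ ((1 : ℝ) / 2) ≤
        (K.card : ℝ) ^ ((1 : ℝ) / 2) :=
      Real.rpow_le_rpow (by positivity) (by exact_mod_cast jumpCount_le_card f K _) (by norm_num)
    rw [inv_zpow']
    split_ifs
    · calc C * 2 ^ (-v) * (jumpCount f K (2 ^ (-v)) : ℝ) ^ ((1 : ℝ) / 2)
          ≤ C * 2 ^ (-v) * (K.card : ℝ) ^ ((1 : ℝ) / 2) := by gcongr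
        _ = _ := by ring
    · positivity

end jumpCount

/-- Maximal function via telescoping along entropy scales: for any `k₀ ∈ K`,
`max_{k ∈ K} |f k| ≤ |f k₀| + C ∑_{v : 2^{-v} ≤ 2 diam} 2^{-v} N_{2^{-v}}^{1/2}`,
where `D` is (an upper bound for) the diameter `max_{k,k'} |f k - f k'|`. -/
theorem stmt14 :
    ∃ C : ℝ, 0 < C ∧ ∀ (f : ℤ → ℝ) (K : Finset ℤ), K.Nonempty →
      ∀ D : ℝ, (∀ k ∈ K, ∀ k' ∈ K, |f k - f k'| ≤ D) →
      ∀ k₀ ∈ K, ∀ k ∈ K,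
        |f k| ≤ |f k₀| + ∑' v : ℤ,
          (if (2:ℝ) ^ (-v) ≤ 2 * D then
            C * (2:ℝ) ^ (-v) * (jumpCount f K ((2:ℝ) ^ (-v)) : ℝ) ^ ((1:ℝ)/2)
          else 0) := by
  refine ⟨4, by norm_num, fun f K _ D hD k₀ hk₀ k hk => ?_⟩
  set F : ℤ → ℝ := fun v => if (2:ℝ) ^ (-v) ≤ 2 * D then
    4 * (2:ℝ) ^ (-v) * (jumpCount f K ((2:ℝ) ^ (-v)) : ℝ) ^ ((1:ℝ)/2) else 0
  have hF : ∀ v, 0 ≤ F v := fun v => by dsimp only [F]; split_ifs <;> positivity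
  have hsum : Summable F := summable_jumpCount_series f K (by norm_num) D
  have hdiff : |f k - f k₀| ≤ ∑' v, F v := by
    rcases (abs_nonneg (f k - f k₀)).eq_or_lt with h0 | hpos
    · exact h0 ▸ tsum_nonneg hF
    obtain ⟨v, hlt, hle⟩ := exists_scale_abs_sub_le hk hk₀ hpos
    have hv : (2:ℝ) ^ (-v) ≤ 2 * D := by linarith [hD k hk k₀ hk₀]
    calc |f k - f k₀| ≤ F v := by simpa only [F, if_pos hv] using hle
      _ ≤ ∑' v, F v := hsum.le_tsum v fun j _ => hF j
  linarith [abs_sub_abs_le_abs_sub (f k) (f k₀)]
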